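/- Let α > 0, set φ_α(ξ) = ξ^{2(α+1)} − ξ², ξ₁(α) = (1/(α+1))^{1/(2α)}, ξ₂(α) = (1/((α+1)(2α+1)))^{1/(2α)}, and fix δ with ξ₂(α) < δ < ξ₁(α). Then there exist constants C > 0 and μ₀ ≥ 1 such that for all μ ≥ μ₀, |∫_{μ^{−1/(2α)}}^{δ} e^{i μ^{1+1/α} φ_α(ξ)} dξ| ≤ C μ^{−1−1/(2α)}. -/

import Mathlib

/-!
Integrate by parts with `e^{iφ} = (e^{iφ})' / (iφ')`: for a phase with `|φ'(ξ)| ≥ κ ξ` and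
`|φ''| ≤ M` on `[a, b] ⊆ (0, ∞)`, the boundary terms are `O(1 / (κ a))` and the remainder
`∫ |φ''| / φ'² ≤ M / κ² ∫_a^∞ ξ⁻² dξ` is `O(M / (κ² a))`. Since `δ < ξ₁(α)`, the phase
`L φ_α` with `L = μ^{1+1/α}` satisfies this with `κ ≍ L`, `M ≍ L` on `(0, δ]`, so for
`a = μ^{-1/(2α)}` the integral is `O(1 / (L a)) = O(μ^{-1-1/(2α)})`.
-/

open MeasureTheory Filter

/-- The rescaled phase `φ_α(ξ) = ξ^{2(α+1)} - ξ²`. -/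
noncomputable def phase (α ξ : ℝ) : ℝ := ξ ^ (2 * (α + 1)) - ξ ^ 2

open Complex intervalIntegral Set

theorem norm_integral_cexp_le_of_hasDerivAt {φ φ' φ'' : ℝ → ℝ} {a b : ℝ} (hab : a ≤ b)
    (hφ : ∀ x ∈ Icc a b, HasDerivAt φ (φ' x) x)
    (hφ' : ∀ x ∈ Icc a b, HasDerivAt φ' (φ'' x) x)
    (hφ''_cont : ContinuousOn φ'' (Icc a b)) (hφ'_ne : ∀ x ∈ Icc a b, φ' x ≠ 0) :
    ‖∫ x in a..b, cexp (I * φ x)‖ ≤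
      |φ' a|⁻¹ + |φ' b|⁻¹ + ∫ x in a..b, |φ'' x| / φ' x ^ 2 := by
  rw [← uIcc_of_le hab] at hφ hφ' hφ''_cont hφ'_ne
  set e : ℝ → ℂ := fun x => cexp (I * φ x)
  set r : ℝ → ℂ := fun x => I * e x * φ'' x / φ' x ^ 2
  have he : ∀ x, ‖e x‖ = 1 := fun x => by simp [e, norm_exp]
  have hr : ∀ x, ‖r x‖ = |φ'' x| / φ' x ^ 2 := fun x => by
    simp [r, he, ← ofReal_pow]
  have hde : ∀ x ∈ uIcc a b, HasDerivAt e (I * φ' x * e x) x := fun x hx => by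
    simpa [e, mul_comm] using ((hφ x hx).ofReal_comp.const_mul I).cexp
  have hdg : ∀ x ∈ uIcc a b, HasDerivAt (fun y => e y / (I * φ' y)) (e x + r x) x := by
    intro x hx
    have hne : I * (φ' x : ℂ) ≠ 0 := mul_ne_zero I_ne_zero (ofReal_ne_zero.2 (hφ'_ne x hx))
    refine ((hde x hx).div ((hφ' x hx).ofReal_comp.const_mul I) hne).congr_deriv ?_
    have : (φ' x : ℂ) ≠ 0 := ofReal_ne_zero.2 (hφ'_ne x hx)
    simp only [r]
    field_simp
    ring_nf
    simp only [I_sq]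
    ring
  have hcont_e : ContinuousOn e (uIcc a b) :=
    fun x hx => (hde x hx).continuousAt.continuousWithinAt
  have hcont_φ' : ContinuousOn φ' (uIcc a b) :=
    fun x hx => (hφ' x hx).continuousAt.continuousWithinAt
  have hcont_r : ContinuousOn r (uIcc a b) :=
    ((continuousOn_const.mul hcont_e).mul (continuous_ofReal.comp_continuousOn hφ''_cont)).div
      ((continuous_ofReal.comp_continuousOn hcont_φ').pow 2)
      fun x hx => pow_ne_zero 2 (ofReal_ne_zero.2 (hφ'_ne x hx))
  have hibp : ∫ x in a..b, e x = e b / (I * φ' b) - e a / (I * φ' a) - ∫ x in a..b, r x := by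
    rw [← integral_eq_sub_of_hasDerivAt hdg
      ((hcont_e.add hcont_r).intervalIntegrable), integral_add hcont_e.intervalIntegrable
      hcont_r.intervalIntegrable]
    ring
  have hg : ∀ x, ‖e x / (I * φ' x)‖ = |φ' x|⁻¹ := fun x => by simp [he]
  calc ‖∫ x in a..b, e x‖
      ≤ ‖e b / (I * φ' b)‖ + ‖e a / (I * φ' a)‖ + ‖∫ x in a..b, r x‖ := by
        rw [hibp]; exact (norm_sub_le _ _).trans (by gcongr; exact norm_sub_le _ _)
    _ ≤ |φ' a|⁻¹ + |φ' b|⁻¹ + ∫ x in a..b, |φ'' x| / φ' x ^ 2 := by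
        rw [hg, hg, add_comm |φ' b|⁻¹]
        gcongr
        simpa only [hr] using norm_integral_le_integral_norm (f := r) (μ := volume) hab

theorem integral_zpow_neg_two {a b : ℝ} (h : (0 : ℝ) ∉ uIcc a b) :
    ∫ x in a..b, x ^ (-2 : ℤ) = a⁻¹ - b⁻¹ := by
  rw [integral_zpow (Or.inr ⟨by norm_num, h⟩)]
  norm_num
  ring

theorem norm_integral_cexp_le_of_mul_le_abs_deriv {φ φ' φ'' : ℝ → ℝ} {a b κ M : ℝ}
    (ha : 0 < a) (hab : a ≤ b) (hκ : 0 < κ)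
    (hφ : ∀ x ∈ Icc a b, HasDerivAt φ (φ' x) x)
    (hφ' : ∀ x ∈ Icc a b, HasDerivAt φ' (φ'' x) x)
    (hφ''_cont : ContinuousOn φ'' (Icc a b))
    (hφ'_ge : ∀ x ∈ Icc a b, κ * x ≤ |φ' x|) (hφ''_le : ∀ x ∈ Icc a b, |φ'' x| ≤ M) :
    ‖∫ x in a..b, cexp (I * φ x)‖ ≤ (2 / κ + M / κ ^ 2) / a := by
  have hpos : ∀ x ∈ Icc a b, 0 < x := fun x hx => ha.trans_le hx.1
  have hφ'_ne : ∀ x ∈ Icc a b, φ' x ≠ 0 := fun x hx h => by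
    simpa [h] using (mul_pos hκ (hpos x hx)).trans_le (hφ'_ge x hx)
  have hinv : ∀ x ∈ Icc a b, |φ' x|⁻¹ ≤ (κ * a)⁻¹ := fun x hx =>
    inv_anti₀ (by positivity) ((mul_le_mul_of_nonneg_left hx.1 hκ.le).trans (hφ'_ge x hx))
  have hM : 0 ≤ M := (abs_nonneg _).trans (hφ''_le a (left_mem_Icc.2 hab))
  have hint : ∫ x in a..b, |φ'' x| / φ' x ^ 2 ≤ M / κ ^ 2 * (a⁻¹ - b⁻¹) := by
    have hcont_φ' : ContinuousOn φ' (Icc a b) :=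
      fun x hx => (hφ' x hx).continuousAt.continuousWithinAt
    have hcont : ContinuousOn (fun x => |φ'' x| / φ' x ^ 2) (Icc a b) :=
      hφ''_cont.abs.div (hcont_φ'.pow 2) fun x hx => pow_ne_zero 2 (hφ'_ne x hx)
    rw [← integral_zpow_neg_two fun h => (hpos 0 (uIcc_of_le hab ▸ h)).false,
      ← intervalIntegral.integral_const_mul]
    refine integral_mono_on hab (hcont.intervalIntegrable_of_Icc hab)
      ((continuousOn_const.mul fun x hx => (continuousAt_zpow₀ x (-2)
        (Or.inl (hpos x hx).ne')).continuousWithinAt).intervalIntegrable_of_Icc hab) fun x hx => ?_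
    have hκx : 0 < κ * x := mul_pos hκ (hpos x hx)
    calc |φ'' x| / φ' x ^ 2 ≤ M / (κ * x) ^ 2 :=
          div_le_div₀ hM (hφ''_le x hx) (by positivity)
            (sq_abs (φ' x) ▸ pow_le_pow_left₀ hκx.le (hφ'_ge x hx) 2)
      _ = M / κ ^ 2 * x ^ (-2 : ℤ) := by rw [zpow_neg, mul_pow]; field_simp
  calc ‖∫ x in a..b, cexp (I * φ x)‖
      ≤ |φ' a|⁻¹ + |φ' b|⁻¹ + ∫ x in a..b, |φ'' x| / φ' x ^ 2 :=
        norm_integral_cexp_le_of_hasDerivAt hab hφ hφ' hφ''_cont hφ'_ne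
    _ ≤ (κ * a)⁻¹ + (κ * a)⁻¹ + M / κ ^ 2 * (a⁻¹ - b⁻¹) :=
        add_le_add_three (hinv a (left_mem_Icc.2 hab)) (hinv b (right_mem_Icc.2 hab)) hint
    _ = (2 / κ + M / κ ^ 2) / a - M / κ ^ 2 * b⁻¹ := by field_simp; ring
    _ ≤ (2 / κ + M / κ ^ 2) / a := sub_le_self _ (by have := ha.trans_le hab; positivity)

noncomputable def phaseDeriv (α ξ : ℝ) : ℝ := 2 * (α + 1) * ξ ^ (2 * α + 1) - 2 * ξ

noncomputable def phaseSecondDeriv (α ξ : ℝ) : ℝ := 2 * (α + 1) * (2 * α + 1) * ξ ^ (2 * α) - 2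

theorem hasDerivAt_phase (α : ℝ) {ξ : ℝ} (hξ : ξ ≠ 0) :
    HasDerivAt (phase α) (phaseDeriv α ξ) ξ := by
  have h := (Real.hasDerivAt_rpow_const (p := 2 * (α + 1)) (Or.inl hξ)).sub (hasDerivAt_pow 2 ξ)
  refine h.congr_deriv ?_
  rw [phaseDeriv, show 2 * (α + 1) - 1 = 2 * α + 1 by ring]
  ring

theorem hasDerivAt_phaseDeriv (α : ℝ) {ξ : ℝ} (hξ : ξ ≠ 0) :
    HasDerivAt (phaseDeriv α) (phaseSecondDeriv α ξ) ξ := by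
  have h := ((Real.hasDerivAt_rpow_const (p := 2 * α + 1) (Or.inl hξ)).const_mul (2 * (α + 1))).sub
    ((hasDerivAt_id ξ).const_mul 2)
  refine h.congr_deriv ?_
  rw [phaseSecondDeriv, show 2 * α + 1 - 1 = 2 * α by ring]
  ring

theorem continuous_phaseSecondDeriv {α : ℝ} (hα : 0 ≤ α) : Continuous (phaseSecondDeriv α) :=
  (continuous_const.mul (Real.continuous_rpow_const (by positivity))).sub continuous_const

theorem mul_le_abs_phaseDeriv {α ξ s : ℝ} (hξ : 0 < ξ) (hs : (α + 1) * ξ ^ (2 * α) ≤ s) :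
    2 * (1 - s) * ξ ≤ |phaseDeriv α ξ| := by
  have h : phaseDeriv α ξ = -(2 * ξ * (1 - (α + 1) * ξ ^ (2 * α))) := by
    rw [phaseDeriv, Real.rpow_add hξ, Real.rpow_one]
    ring
  rw [h, abs_neg]
  nlinarith [le_abs_self (2 * ξ * (1 - (α + 1) * ξ ^ (2 * α)))]

theorem abs_phaseSecondDeriv_le {α ξ : ℝ} (hα : 0 ≤ α) (hξ : 0 ≤ ξ)
    (h : (α + 1) * ξ ^ (2 * α) ≤ 1) : |phaseSecondDeriv α ξ| ≤ 2 * (2 * α + 1) := by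
  have h0 : 0 ≤ (α + 1) * ξ ^ (2 * α) := by positivity
  rw [phaseSecondDeriv, abs_le]
  constructor <;> nlinarith

theorem norm_integral_cexp_mul_phase_le {α δ s a L : ℝ} (hα : 0 ≤ α)
    (hδs : (α + 1) * δ ^ (2 * α) ≤ s) (hs : s < 1) (ha : 0 < a) (haδ : a ≤ δ) (hL : 0 < L) :
    ‖∫ ξ in a..δ, cexp (I * ((L * phase α ξ : ℝ) : ℂ))‖ ≤
      (2 / (2 * (1 - s)) + 2 * (2 * α + 1) / (2 * (1 - s)) ^ 2) / (L * a) := by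
  have hpos : ∀ x ∈ Icc a δ, 0 < x := fun x hx => ha.trans_le hx.1
  have hle : ∀ x ∈ Icc a δ, (α + 1) * x ^ (2 * α) ≤ s := fun x hx =>
    (mul_le_mul_of_nonneg_left (Real.rpow_le_rpow (hpos x hx).le hx.2 (by positivity))
      (by positivity)).trans hδs
  have hs' : 0 < 1 - s := sub_pos.2 hs
  refine (norm_integral_cexp_le_of_mul_le_abs_deriv (φ' := fun ξ => L * phaseDeriv α ξ)
    (φ'' := fun ξ => L * phaseSecondDeriv α ξ) (κ := 2 * (1 - s) * L)
    (M := L * (2 * (2 * α + 1))) ha haδ (by positivity)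
    (fun x hx => (hasDerivAt_phase α (hpos x hx).ne').const_mul L)
    (fun x hx => (hasDerivAt_phaseDeriv α (hpos x hx).ne').const_mul L)
    ((continuous_phaseSecondDeriv hα).const_mul L).continuousOn (fun x hx => ?_)
    (fun x hx => ?_)).trans_eq (by field_simp)
  · rw [abs_mul, abs_of_pos hL, mul_right_comm]
    exact (mul_comm _ _).trans_le <|
      mul_le_mul_of_nonneg_left (mul_le_abs_phaseDeriv (hpos x hx) (hle x hx)) hL.le
  · rw [abs_mul, abs_of_pos hL]
    exact mul_le_mul_of_nonneg_left (abs_phaseSecondDeriv_le hα (hpos x hx).le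
      ((hle x hx).trans hs.le)) hL.le

/-- For `α > 0` and `ξ₂(α) < δ < ξ₁(α)` (where `ξ₁(α) = (1/(α+1))^{1/(2α)}` and
`ξ₂(α) = (1/((α+1)(2α+1)))^{1/(2α)}`), there exist `C > 0` and `μ₀ ≥ 1` such that for all
`μ ≥ μ₀`, `|∫_{μ^{-1/(2α)}}^δ e^{iμ^{1+1/α} φ_α(ξ)} dξ| ≤ C μ^{-1-1/(2α)}`. -/
theorem nonstationary_inner_bound (α δ : ℝ) (hα : 0 < α)
    (hδ₂ : (1 / ((α + 1) * (2 * α + 1))) ^ (1 / (2 * α) : ℝ) < δ)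
    (hδ₁ : δ < (1 / (α + 1)) ^ (1 / (2 * α) : ℝ)) :
    ∃ C : ℝ, 0 < C ∧
      ∃ μ₀ : ℝ, 1 ≤ μ₀ ∧
        ∀ μ : ℝ, μ₀ ≤ μ →
          ‖∫ ξ in (μ ^ (-(1 / (2 * α)) : ℝ))..δ,
              Complex.exp (Complex.I * ((μ ^ (1 + 1 / α) * phase α ξ : ℝ) : ℂ))‖ ≤
            C * μ ^ (-1 - 1 / (2 * α) : ℝ) := by
  have hδ : 0 < δ := (Real.rpow_pos_of_pos (by positivity) _).trans hδ₂
  set s := (α + 1) * δ ^ (2 * α)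
  have hs : s < 1 := by
    rwa [one_div (2 * α), Real.lt_rpow_inv_iff_of_pos hδ.le (by positivity) (by positivity),
      lt_div_iff₀' (by positivity)] at hδ₁
  have hs' : 0 < 1 - s := sub_pos.2 hs
  refine ⟨2 / (2 * (1 - s)) + 2 * (2 * α + 1) / (2 * (1 - s)) ^ 2, by positivity,
    max 1 (δ ^ (-(2 * α))), le_max_left _ _, fun μ hμ₀ => ?_⟩
  have hμ : 0 < μ := one_pos.trans_le ((le_max_left _ _).trans hμ₀)
  have haδ : μ ^ (-(1 / (2 * α))) ≤ δ := by
    rw [← one_div_neg_eq_neg_one_div, one_div, Real.rpow_inv_le_iff_of_neg hμ hδ (by linarith)]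
    exact (le_max_right _ _).trans hμ₀
  have hscale : μ ^ (-1 - 1 / (2 * α)) = (μ ^ (1 + 1 / α) * μ ^ (-(1 / (2 * α))))⁻¹ := by
    rw [← Real.rpow_add hμ, ← Real.rpow_neg hμ.le]
    congr 1
    field_simp
    ring
  rw [hscale, ← div_eq_mul_inv]
  exact norm_integral_cexp_mul_phase_le hα.le le_rfl hs (by positivity) haδ (by positivity)
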